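/- arXiv:1202.0786 — 2 statements merged into one kernel-verified Lean document; each statement's English description precedes it below -/
import Mathlib

section
/- Let x₁, x₂ be unit vectors in ℝ^p, λ₁ > λ₂ > 0, and Σᵢ = (λ₁ - λ₂)xᵢxᵢᵀ + λ₂I for i = 1, 2. Then tr(Σ₂⁻¹(Σ₁ - Σ₂)) = ((λ₁ - λ₂)²/(2λ₁λ₂))‖x₁x₁ᵀ - x₂x₂ᵀ‖_F². -/
open Matrix BigOperators

noncomputable def frobSq {p : ℕ} (A : Matrix (Fin p) (Fin p) ℝ) : ℝ :=
  ∑ i, ∑ j, (A i j) ^ 2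

lemma vecMulVec_mul_vecMulVec' {p : ℕ} (a b c d : Fin p → ℝ) :
    vecMulVec a b * vecMulVec c d = (∑ k, b k * c k) • vecMulVec a d := by
  ext i j
  simp only [Matrix.mul_apply, vecMulVec_apply, Matrix.smul_apply, smul_eq_mul,
    Finset.sum_mul]
  exact Finset.sum_congr rfl fun k _ => by ring

lemma trace_vecMulVec' {p : ℕ} (a b : Fin p → ℝ) :
    Matrix.trace (vecMulVec a b) = ∑ i, a i * b i := by
  simp [Matrix.trace, Matrix.diag, vecMulVec_apply]

theorem stmt5 {p : ℕ} (x₁ x₂ : Fin p → ℝ) (l₁ l₂ : ℝ)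
    (hx₁ : ∑ i, (x₁ i) ^ 2 = 1) (hx₂ : ∑ i, (x₂ i) ^ 2 = 1)
    (h12 : l₂ < l₁) (h2 : 0 < l₂)
    (S₁ S₂ : Matrix (Fin p) (Fin p) ℝ)
    (hS₁ : S₁ = (l₁ - l₂) • vecMulVec x₁ x₁ + l₂ • 1)
    (hS₂ : S₂ = (l₁ - l₂) • vecMulVec x₂ x₂ + l₂ • 1) :
    Matrix.trace (S₂⁻¹ * (S₁ - S₂))
      = ((l₁ - l₂) ^ 2 / (2 * l₁ * l₂)) * frobSq (vecMulVec x₁ x₁ - vecMulVec x₂ x₂) := by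
  have h1 : (0:ℝ) < l₁ := lt_trans h2 h12
  have hl1 : l₁ ≠ 0 := ne_of_gt h1
  have hl2 : l₂ ≠ 0 := ne_of_gt h2
  set P₁ := vecMulVec x₁ x₁ with hP₁def
  set P₂ := vecMulVec x₂ x₂ with hP₂def
  set t := ∑ i, x₁ i * x₂ i with ht
  have hx₁' : (∑ i, x₁ i * x₁ i) = 1 := by simpa [sq] using hx₁
  have hx₂' : (∑ i, x₂ i * x₂ i) = 1 := by simpa [sq] using hx₂
  have ht' : (∑ i, x₂ i * x₁ i) = t := by
    rw [ht]; exact Finset.sum_congr rfl fun k _ => mul_comm _ _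
  have hP2 : P₂ * P₂ = P₂ := by
    rw [hP₂def, vecMulVec_mul_vecMulVec', hx₂', one_smul]
  set B : Matrix (Fin p) (Fin p) ℝ :=
    l₂⁻¹ • 1 - ((l₁ - l₂) / (l₁ * l₂)) • P₂ with hB
  have key : S₂ * B = 1 := by
    rw [hS₂, hB]
    simp only [mul_sub, add_mul, smul_mul_assoc, mul_smul_comm, hP2,
      Matrix.mul_one, Matrix.one_mul]
    match_scalars <;> field_simp <;> ring
  rw [Matrix.inv_eq_right_inv key]
  have hdiff : S₁ - S₂ = (l₁ - l₂) • P₁ - (l₁ - l₂) • P₂ := by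
    rw [hS₁, hS₂]; abel
  rw [hdiff, hB]
  simp only [sub_mul, mul_sub, smul_mul_assoc, mul_smul_comm,
    Matrix.one_mul, Matrix.mul_one, hP2]
  rw [show P₂ * P₁ = t • vecMulVec x₂ x₁ from by
    rw [hP₂def, hP₁def, vecMulVec_mul_vecMulVec', ht']]
  simp only [Matrix.trace_sub, Matrix.trace_smul, smul_eq_mul,
    trace_vecMulVec', hP₁def, hP₂def]
  simp only [trace_vecMulVec', hx₁', hx₂', ht', ← ht]
  have hfrob : frobSq (vecMulVec x₁ x₁ - vecMulVec x₂ x₂) = 2 - 2 * t ^ 2 := by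
    unfold frobSq
    have he : ∀ i j : Fin p, ((vecMulVec x₁ x₁ - vecMulVec x₂ x₂) i j) ^ 2
        = x₁ i ^ 2 * x₁ j ^ 2 - 2 * ((x₁ i * x₂ i) * (x₁ j * x₂ j)) + x₂ i ^ 2 * x₂ j ^ 2 := by
      intro i j
      simp only [Matrix.sub_apply, vecMulVec_apply]
      ring
    simp only [he, Finset.sum_add_distrib, Finset.sum_sub_distrib, ← Finset.mul_sum]
    simp only [hx₁, hx₂, ← ht, ← Finset.sum_mul, mul_one]
    ring
  rw [hfrob]
  field_simp
  ring
end

section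
/- Let v ∈ ℝ^m with ‖v‖_q^q ≤ R for some q ∈ (0,1) and R > 0, and let t > 0. Then ‖v‖₁ ≤ ‖v‖₂ · R^{1/2} · t^{-q/2} + R t^{1-q}. -/
open BigOperators

theorem stmt9 {m : ℕ} (v : Fin m → ℝ) (q R t : ℝ)
    (hq : q ∈ Set.Ioo (0 : ℝ) 1) (hR : 0 < R) (ht : 0 < t)
    (hlq : ∑ i, |v i| ^ q ≤ R) :
    ∑ i, |v i| ≤ Real.sqrt (∑ i, (v i) ^ 2) * R ^ ((1 : ℝ) / 2) * t ^ (-(q / 2))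
      + R * t ^ (1 - q) := by
  obtain ⟨hq0, hq1⟩ := hq
  set S : Finset (Fin m) := Finset.univ.filter (fun i => t < |v i|) with hS
  have hsplit : ∑ i, |v i| = ∑ i ∈ S, |v i| + ∑ i ∈ Sᶜ, |v i| :=
    (Finset.sum_add_sum_compl S _).symm
  -- sum of |v|^q is nonneg termwise
  have habs : ∀ i, (0:ℝ) ≤ |v i| := fun i => abs_nonneg _
  -- Bound on the small part
  have hsmall : ∑ i ∈ Sᶜ, |v i| ≤ R * t ^ (1 - q) := by
    have h1 : ∀ i ∈ Sᶜ, |v i| ≤ |v i| ^ q * t ^ (1 - q) := by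
      intro i hi
      have hle : |v i| ≤ t := by
        simp only [hS, Finset.mem_compl, Finset.mem_filter, Finset.mem_univ, true_and,
          not_lt] at hi
        exact hi
      calc |v i| = |v i| ^ q * |v i| ^ (1 - q) := by
            rw [← Real.rpow_add' (habs i) (by norm_num), add_sub_cancel, Real.rpow_one]
        _ ≤ |v i| ^ q * t ^ (1 - q) := by
            apply mul_le_mul_of_nonneg_left _ (Real.rpow_nonneg (habs i) q)
            exact Real.rpow_le_rpow (habs i) hle (by linarith)
    calc ∑ i ∈ Sᶜ, |v i| ≤ ∑ i ∈ Sᶜ, |v i| ^ q * t ^ (1 - q) :=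
          Finset.sum_le_sum h1
      _ = (∑ i ∈ Sᶜ, |v i| ^ q) * t ^ (1 - q) := by rw [Finset.sum_mul]
      _ ≤ (∑ i, |v i| ^ q) * t ^ (1 - q) := by
          apply mul_le_mul_of_nonneg_right _ (Real.rpow_nonneg (le_of_lt ht) _)
          exact Finset.sum_le_sum_of_subset_of_nonneg (Finset.subset_univ _)
            (fun i _ _ => Real.rpow_nonneg (habs i) q)
      _ ≤ R * t ^ (1 - q) :=
          mul_le_mul_of_nonneg_right hlq (Real.rpow_nonneg (le_of_lt ht) _)
  -- Bound on the cardinality of S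
  have hcard : (S.card : ℝ) ≤ R * t ^ (-q) := by
    have h2 : (S.card : ℝ) * t ^ q ≤ ∑ i ∈ S, |v i| ^ q := by
      have : (S.card : ℝ) * t ^ q = ∑ _i ∈ S, t ^ q := by
        rw [Finset.sum_const, nsmul_eq_mul]
      rw [this]
      apply Finset.sum_le_sum
      intro i hi
      have : t < |v i| := by
        simp only [hS, Finset.mem_filter, Finset.mem_univ, true_and] at hi; exact hi
      exact Real.rpow_le_rpow (le_of_lt ht) (le_of_lt this) (le_of_lt hq0)
    have h3 : ∑ i ∈ S, |v i| ^ q ≤ R :=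
      le_trans (Finset.sum_le_sum_of_subset_of_nonneg (Finset.subset_univ _)
        (fun i _ _ => Real.rpow_nonneg (habs i) q)) hlq
    have htq : (0:ℝ) < t ^ q := Real.rpow_pos_of_pos ht q
    have := le_trans h2 h3
    rw [Real.rpow_neg (le_of_lt ht), ← div_eq_mul_inv]
    rw [le_div_iff₀ htq]
    exact this
  -- Cauchy-Schwarz on the big part
  have hsq : (0:ℝ) ≤ ∑ i, (v i) ^ 2 := Finset.sum_nonneg fun i _ => sq_nonneg _
  have hbig : ∑ i ∈ S, |v i| ≤ Real.sqrt (∑ i, (v i) ^ 2) * R ^ ((1:ℝ)/2) * t ^ (-(q/2)) := by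
    have hcs : (∑ i ∈ S, |v i| * 1) ^ 2 ≤ (∑ i ∈ S, |v i| ^ 2) * (∑ i ∈ S, (1:ℝ) ^ 2) :=
      Finset.sum_mul_sq_le_sq_mul_sq S _ _
    simp only [mul_one, one_pow, Finset.sum_const, nsmul_eq_mul] at hcs
    have hsub : (∑ i ∈ S, |v i| ^ 2) ≤ ∑ i, (v i) ^ 2 := by
      have : ∀ i, |v i| ^ 2 = (v i) ^ 2 := fun i => sq_abs _
      simp only [this]
      exact Finset.sum_le_sum_of_subset_of_nonneg (Finset.subset_univ _)
        (fun i _ _ => sq_nonneg _)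
    have hbound : (∑ i ∈ S, |v i|) ^ 2 ≤ (∑ i, (v i) ^ 2) * (R * t ^ (-q)) := by
      calc (∑ i ∈ S, |v i|) ^ 2 ≤ (∑ i ∈ S, |v i| ^ 2) * S.card := hcs
        _ ≤ (∑ i, (v i) ^ 2) * (R * t ^ (-q)) := by
            apply mul_le_mul hsub hcard (Nat.cast_nonneg _) hsq
    have hnn : (0:ℝ) ≤ ∑ i ∈ S, |v i| := Finset.sum_nonneg fun i _ => habs i
    have := Real.sqrt_le_sqrt hbound
    rw [Real.sqrt_sq hnn] at this
    calc ∑ i ∈ S, |v i| ≤ Real.sqrt ((∑ i, (v i) ^ 2) * (R * t ^ (-q))) := this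
      _ = Real.sqrt (∑ i, (v i) ^ 2) * R ^ ((1:ℝ)/2) * t ^ (-(q/2)) := by
          rw [Real.sqrt_mul hsq, Real.sqrt_mul (le_of_lt hR), ← mul_assoc,
            Real.sqrt_eq_rpow R]
          congr 1
          rw [Real.sqrt_eq_rpow, ← Real.rpow_mul (le_of_lt ht)]
          ring_nf
  linarith [hsplit, hsmall, hbig]
end
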